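/- Let n ≥ 1, let Ω ⊂ ℝⁿ be open and bounded, and let s₀ ∈ (0,1/2). Assume there exist c* > 0 and η > 2s₀ such that 𝓛ⁿ(D_r^Ω(Ω^c)) ≤ c* · min{r^η, 1} for all r ∈ [0,1]. Then ∫₀^∞ t^{−(1+s₀)} ∫_Ω ∫_{Ω^c} p_t(x,y) dy dx dt < ∞. In particular, for every measurable E ⊂ ℝⁿ, L_{s₀}(E ∩ Ω, E ∩ Ω^c) < ∞. -/

import Mathlib

open MeasureTheory Real Filter Topology Set
open scoped ENNReal

/-- The classical heat kernel on `ℝⁿ`. -/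
noncomputable def heatKernel (n : ℕ) (t : ℝ) (x y : EuclideanSpace ℝ (Fin n)) : ℝ :=
  (4 * π * t) ^ (-(n : ℝ) / 2) * Real.exp (-‖x - y‖ ^ 2 / (4 * t))

/-- `L_s(A,B) = ∫₀^∞ t^{-(1+s)} ∫_A ∫_B p_t(x,y) dy dx dt`. -/
noncomputable def Lfun (n : ℕ) (s : ℝ) (A B : Set (EuclideanSpace ℝ (Fin n))) : ℝ≥0∞ :=
  ∫⁻ t in Set.Ioi (0:ℝ), ENNReal.ofReal (t ^ (-(1 + s))) *
    ∫⁻ x in A, ∫⁻ y in B, ENNReal.ofReal (heatKernel n t x y)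

/-- The inner collar `D_r^Ω(Ωᶜ) = {x ∈ Ω : dist(x, Ωᶜ) ≤ r}`. -/
def innerCollar (n : ℕ) (Ω : Set (EuclideanSpace ℝ (Fin n))) (r : ℝ) :
    Set (EuclideanSpace ℝ (Fin n)) :=
  {x | x ∈ Ω ∧ Metric.infDist x Ωᶜ ≤ r}

/-! For `x ∈ Ω` put `d(x) = dist(x, Ωᶜ)`. On `Ωᶜ` one has
`p_t(x, ·) ≤ 2^{n/2} e^{-d(x)²/8t} p_{2t}(x, ·)`, and `p_{2t}(x, ·)` has mass one, so
`∫_{Ωᶜ} p_t(x, y) dy ≤ 2^{n/2} e^{-d(x)²/8t}`. Integrating in time first, the substitution `t ↦ 1/t`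
gives `∫₀^∞ t^{-1-s} e^{-d²/8t} dt = Γ(s) 8^s d^{-2s}`, hence `L_s(Ω, Ωᶜ) ≲ ∫_Ω d^{-2s}`. By the
layer-cake formula this is finite: for `λ > 1` the superlevel set `{d^{-2s} > λ}` lies in the collar
of width `λ^{-1/2s}`, of measure `≲ λ^{-η/2s}`, which is integrable at infinity because `η > 2s`. -/

theorem lintegral_rpow_neg_mul_exp_neg_div {s a : ℝ} (hs : 0 < s) (ha : 0 < a) :
    ∫⁻ t in Ioi (0:ℝ), ENNReal.ofReal (t ^ (-(1 + s))) * ENNReal.ofReal (exp (-a / t)) =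
      ENNReal.ofReal (Gamma s * a ^ (-s)) := by
  have hinv : (fun x : ℝ => x⁻¹) '' Ioi 0 = Ioi 0 := by
    ext y
    exact ⟨fun ⟨x, hx, hxy⟩ => hxy ▸ inv_pos.2 (mem_Ioi.1 hx),
      fun hy => ⟨y⁻¹, inv_pos.2 (mem_Ioi.1 hy), inv_inv y⟩⟩
  have hgamma : ∫⁻ u in Ioi (0:ℝ), ENNReal.ofReal (u ^ (s - 1) * exp (-(a * u))) =
      ENNReal.ofReal (Gamma s * a ^ (-s)) := by
    have hint : IntegrableOn (fun u : ℝ => u ^ (s - 1) * exp (-(a * u))) (Ioi 0) := by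
      simpa using integrableOn_rpow_mul_exp_neg_mul_rpow (p := 1) (by linarith) one_pos ha
    rw [← ofReal_integral_eq_lintegral_ofReal hint, integral_rpow_mul_exp_neg_mul_Ioi hs ha,
      one_div, inv_rpow ha.le, rpow_neg ha.le, mul_comm]
    filter_upwards [ae_restrict_mem measurableSet_Ioi] with u (hu : 0 < u)
    positivity
  rw [← hgamma, ← hinv, lintegral_image_eq_lintegral_abs_deriv_mul measurableSet_Ioi
    (fun x hx => (hasDerivAt_inv (ne_of_gt hx)).hasDerivWithinAt) inv_injective.injOn, hinv]
  refine setLIntegral_congr_fun measurableSet_Ioi fun t (ht : 0 < t) => ?_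
  rw [← ENNReal.ofReal_mul (by positivity), ← ENNReal.ofReal_mul (abs_nonneg _)]
  congr 1
  rw [abs_neg, abs_of_pos (by positivity), inv_rpow ht.le, ← rpow_neg ht.le, neg_neg,
    div_inv_eq_mul, ← mul_assoc, ← rpow_two, ← rpow_neg ht.le, ← rpow_add ht]
  congr 2 <;> ring

theorem lintegral_heatKernel_eq_one (n : ℕ) {t : ℝ} (ht : 0 < t) (x : EuclideanSpace ℝ (Fin n)) :
    ∫⁻ y, ENNReal.ofReal (heatKernel n t x y) = 1 := by
  set g : EuclideanSpace ℝ (Fin n) → ℝ :=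
    fun v => (4 * π * t) ^ (-(n : ℝ) / 2) * rexp (-(4 * t)⁻¹ * ‖v‖ ^ 2)
  have hg : ∀ y, heatKernel n t x y = g (x - y) := fun y => by
    rw [heatKernel]; congr 2; ring
  have hgauss := GaussianFourier.integral_rexp_neg_mul_sq_norm
    (V := EuclideanSpace ℝ (Fin n)) (by positivity : 0 < (4 * t)⁻¹)
  have hint : Integrable fun v : EuclideanSpace ℝ (Fin n) => rexp (-(4 * t)⁻¹ * ‖v‖ ^ 2) :=
    Integrable.of_integral_ne_zero (by rw [hgauss]; positivity)
  simp_rw [hg]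
  rw [lintegral_sub_left_eq_self (fun v => ENNReal.ofReal (g v)),
    ← ofReal_integral_eq_lintegral_ofReal (hint.const_mul _) (.of_forall fun v => by positivity),
    integral_const_mul, hgauss, finrank_euclideanSpace_fin, div_inv_eq_mul, neg_div,
    rpow_neg (by positivity), show π * (4 * t) = 4 * π * t by ring,
    inv_mul_cancel₀ (by positivity), ENNReal.ofReal_one]

theorem heatKernel_le_exp_mul_heatKernel (n : ℕ) {t d : ℝ} (ht : 0 < t) (hd : 0 ≤ d)
    {x y : EuclideanSpace ℝ (Fin n)} (hxy : d ≤ ‖x - y‖) :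
    heatKernel n t x y ≤
      2 ^ ((n : ℝ) / 2) * rexp (-d ^ 2 / (8 * t)) * heatKernel n (2 * t) x y := by
  have hexp : rexp (-‖x - y‖ ^ 2 / (4 * t)) ≤
      rexp (-d ^ 2 / (8 * t)) * rexp (-‖x - y‖ ^ 2 / (4 * (2 * t))) := by
    rw [← exp_add, exp_le_exp, ← sub_nonneg]
    have : d ^ 2 ≤ ‖x - y‖ ^ 2 := pow_le_pow_left₀ hd hxy 2
    field_simp
    nlinarith
  have hconst : (4 * π * t) ^ (-(n : ℝ) / 2) =
      2 ^ ((n : ℝ) / 2) * (4 * π * (2 * t)) ^ (-(n : ℝ) / 2) := by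
    rw [show 4 * π * (2 * t) = 2 * (4 * π * t) by ring,
      mul_rpow (x := 2) (by norm_num) (by positivity), ← mul_assoc, ← rpow_add two_pos, neg_div,
      add_neg_cancel, rpow_zero, one_mul]
  rw [heatKernel, heatKernel, hconst]
  calc _ ≤ 2 ^ ((n : ℝ) / 2) * (4 * π * (2 * t)) ^ (-(n : ℝ) / 2) *
      (rexp (-d ^ 2 / (8 * t)) * rexp (-‖x - y‖ ^ 2 / (4 * (2 * t)))) := by gcongr
    _ = _ := by ring

theorem setLIntegral_heatKernel_le (n : ℕ) {t : ℝ} (ht : 0 < t) (x : EuclideanSpace ℝ (Fin n))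
    (B : Set (EuclideanSpace ℝ (Fin n))) :
    ∫⁻ y in B, ENNReal.ofReal (heatKernel n t x y) ≤
      ENNReal.ofReal (2 ^ ((n : ℝ) / 2) * rexp (-Metric.infDist x B ^ 2 / (8 * t))) := by
  set C := 2 ^ ((n : ℝ) / 2) * rexp (-Metric.infDist x B ^ 2 / (8 * t))
  calc ∫⁻ y in B, ENNReal.ofReal (heatKernel n t x y)
      ≤ ∫⁻ y in B, ENNReal.ofReal C * ENNReal.ofReal (heatKernel n (2 * t) x y) := by
        refine setLIntegral_mono (by unfold heatKernel; fun_prop) fun y hy => ?_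
        rw [← ENNReal.ofReal_mul (by positivity)]
        refine ENNReal.ofReal_le_ofReal (heatKernel_le_exp_mul_heatKernel n ht
          Metric.infDist_nonneg ?_)
        simpa [dist_eq_norm] using Metric.infDist_le_dist_of_mem hy
    _ ≤ ∫⁻ y, ENNReal.ofReal C * ENNReal.ofReal (heatKernel n (2 * t) x y) :=
        setLIntegral_le_lintegral _ _
    _ = ENNReal.ofReal C := by
        rw [lintegral_const_mul' _ _ ENNReal.ofReal_ne_top,
          lintegral_heatKernel_eq_one n (by positivity) x, mul_one]

theorem setLIntegral_rpow_neg_lt_top {α : Type*} [MeasurableSpace α] {μ : Measure α}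
    {Ω : Set α} {f : α → ℝ} (hf : Measurable f) (hf0 : ∀ x, 0 ≤ f x) (hΩ : μ Ω ≠ ⊤)
    {p η c : ℝ} (hp : 0 < p) (hpη : p < η)
    (hsub : ∀ r ∈ Icc (0:ℝ) 1, μ {x | x ∈ Ω ∧ f x ≤ r} ≤ ENNReal.ofReal (c * r ^ η)) :
    ∫⁻ x in Ω, ENNReal.ofReal (f x ^ (-p)) ∂μ < ⊤ := by
  have hsuper : ∀ l ∈ Ioi (1:ℝ), μ.restrict Ω {x | l < f x ^ (-p)} ≤
      ENNReal.ofReal (c * l ^ (-(η / p))) := by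
    intro l (hl : 1 < l)
    have hr : l ^ (-p)⁻¹ ∈ Icc (0:ℝ) 1 :=
      ⟨by positivity, rpow_le_one_of_one_le_of_nonpos hl.le (by simp [hp.le])⟩
    calc μ.restrict Ω {x | l < f x ^ (-p)}
        ≤ μ {x | x ∈ Ω ∧ f x ≤ l ^ (-p)⁻¹} := by
          rw [Measure.restrict_apply (measurableSet_lt measurable_const (hf.pow_const _))]
          refine measure_mono fun x ⟨hlx, hx⟩ => ⟨hx, ?_⟩
          rcases (hf0 x).eq_or_lt with h0 | hpos
          · rw [← h0]; exact hr.1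
          · exact ((lt_rpow_inv_iff_of_neg hpos (by linarith) (by linarith)).2 hlx).le
      _ ≤ ENNReal.ofReal (c * (l ^ (-p)⁻¹) ^ η) := hsub _ hr
      _ = ENNReal.ofReal (c * l ^ (-(η / p))) := by
          rw [← rpow_mul (by linarith)]; congr 3; field_simp
  have htail : IntegrableOn (fun l : ℝ => c * l ^ (-(η / p))) (Ioi 1) :=
    (integrableOn_Ioi_rpow_of_lt (by rw [neg_lt_neg_iff, one_lt_div hp]; exact hpη)
      one_pos).const_mul c
  rw [lintegral_eq_lintegral_meas_lt _ (Eventually.of_forall fun x => rpow_nonneg (hf0 x) _)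
      (hf.pow_const _).aemeasurable, ← Ioc_union_Ioi_eq_Ioi zero_le_one,
    lintegral_union measurableSet_Ioi (Ioc_disjoint_Ioi le_rfl)]
  refine ENNReal.add_lt_top.2 ⟨?_, ?_⟩
  · calc ∫⁻ l in Ioc (0:ℝ) 1, μ.restrict Ω {x | l < f x ^ (-p)}
        ≤ ∫⁻ _ in Ioc (0:ℝ) 1, μ Ω :=
          lintegral_mono fun l => (measure_mono (subset_univ _)).trans_eq
            (Measure.restrict_apply_univ Ω)
      _ < ⊤ := by simp [hΩ.lt_top]
  · calc ∫⁻ l in Ioi (1:ℝ), μ.restrict Ω {x | l < f x ^ (-p)}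
        ≤ ∫⁻ l in Ioi (1:ℝ), ENNReal.ofReal (c * l ^ (-(η / p))) :=
          setLIntegral_mono' measurableSet_Ioi hsuper
      _ < ⊤ := htail.lintegral_lt_top

theorem Lfun_mono (n : ℕ) (s : ℝ) {A A' B B' : Set (EuclideanSpace ℝ (Fin n))}
    (hA : A ⊆ A') (hB : B ⊆ B') : Lfun n s A B ≤ Lfun n s A' B' :=
  lintegral_mono fun _ => mul_le_mul_right
    ((lintegral_mono fun _ => lintegral_mono_set hB).trans (lintegral_mono_set hA)) _

theorem Lfun_compl_le (n : ℕ) {s : ℝ} (hs : 0 < s) (Ω : Set (EuclideanSpace ℝ (Fin n)))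
    (h0 : volume (innerCollar n Ω 0) = 0) :
    Lfun n s Ω Ωᶜ ≤ ENNReal.ofReal (2 ^ ((n : ℝ) / 2) * Gamma s * 8 ^ s) *
      ∫⁻ x in Ω, ENNReal.ofReal (Metric.infDist x Ωᶜ ^ (-(2 * s))) := by
  set d : EuclideanSpace ℝ (Fin n) → ℝ := fun x => Metric.infDist x Ωᶜ
  have hd : Continuous d := Metric.continuous_infDist_pt _
  -- At `d x = 0` the weight is the junk value `0 ^ (-2s) = 0` while the time integral diverges,
  -- so the bound needs that set to be null.
  have hpos : ∀ᵐ x ∂volume.restrict Ω, 0 < d x := by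
    rw [ae_restrict_iff (measurableSet_lt measurable_const hd.measurable)]
    filter_upwards [measure_eq_zero_iff_ae_notMem.1 h0] with x hx hxΩ
    exact lt_of_not_ge fun hle => hx ⟨hxΩ, hle⟩
  have htime : ∀ x, 0 < d x → ∫⁻ t in Ioi (0:ℝ), ENNReal.ofReal (t ^ (-(1 + s))) *
      ENNReal.ofReal (2 ^ ((n : ℝ) / 2) * rexp (-d x ^ 2 / (8 * t))) =
      ENNReal.ofReal (2 ^ ((n : ℝ) / 2) * Gamma s * 8 ^ s) *
        ENNReal.ofReal (d x ^ (-(2 * s))) := by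
    intro x hx
    have hexp : ∀ t, rexp (-d x ^ 2 / (8 * t)) = rexp (-(d x ^ 2 / 8) / t) := fun t => by
      rw [neg_div, neg_div, div_div]
    simp_rw [ENNReal.ofReal_mul (rpow_nonneg zero_le_two _ : (0:ℝ) ≤ 2 ^ ((n : ℝ) / 2)), hexp,
      mul_left_comm (ENNReal.ofReal (_ ^ (-(1 + s))))]
    rw [lintegral_const_mul' _ _ ENNReal.ofReal_ne_top,
      lintegral_rpow_neg_mul_exp_neg_div hs (by positivity), ← ENNReal.ofReal_mul (by positivity),
      ← ENNReal.ofReal_mul (by positivity)]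
    congr 1
    rw [div_rpow (by positivity) (by norm_num), ← rpow_natCast, ← rpow_mul hx.le,
      rpow_neg (by norm_num : (0:ℝ) ≤ 8), div_inv_eq_mul]
    push_cast
    ring_nf
  calc Lfun n s Ω Ωᶜ
      ≤ ∫⁻ t in Ioi (0:ℝ), ENNReal.ofReal (t ^ (-(1 + s))) *
          ∫⁻ x in Ω, ENNReal.ofReal (2 ^ ((n : ℝ) / 2) * rexp (-d x ^ 2 / (8 * t))) :=
        setLIntegral_mono' measurableSet_Ioi fun t ht => by
          gcongr with x
          exact setLIntegral_heatKernel_le n ht x Ωᶜ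
    _ = ∫⁻ x in Ω, ∫⁻ t in Ioi (0:ℝ), ENNReal.ofReal (t ^ (-(1 + s))) *
          ENNReal.ofReal (2 ^ ((n : ℝ) / 2) * rexp (-d x ^ 2 / (8 * t))) := by
        simp_rw [← lintegral_const_mul' _ _ ENNReal.ofReal_ne_top]
        exact lintegral_lintegral_swap (by fun_prop)
    _ = ∫⁻ x in Ω, ENNReal.ofReal (2 ^ ((n : ℝ) / 2) * Gamma s * 8 ^ s) *
          ENNReal.ofReal (d x ^ (-(2 * s))) :=
        lintegral_congr_ae (hpos.mono htime)
    _ = _ := lintegral_const_mul' _ _ ENNReal.ofReal_ne_top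

theorem statement19_general (n : ℕ) (Ω : Set (EuclideanSpace ℝ (Fin n)))
    (hΩb : Bornology.IsBounded Ω)
    (s₀ : ℝ) (hs₀ : s₀ ∈ Set.Ioo (0:ℝ) (1/2))
    (c : ℝ) (hc : 0 < c) (η : ℝ) (hη : 2 * s₀ < η)
    (hbd : ∀ r ∈ Set.Icc (0:ℝ) 1,
      volume (innerCollar n Ω r) ≤ ENNReal.ofReal (c * min (r ^ η) 1)) :
    Lfun n s₀ Ω Ωᶜ < ⊤ ∧
      ∀ E : Set (EuclideanSpace ℝ (Fin n)), MeasurableSet E →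
        Lfun n s₀ (E ∩ Ω) (E ∩ Ωᶜ) < ⊤ := by
  obtain ⟨hs0, -⟩ := hs₀
  have hcollar : ∀ r ∈ Icc (0:ℝ) 1,
      volume (innerCollar n Ω r) ≤ ENNReal.ofReal (c * r ^ η) := fun r hr =>
    (hbd r hr).trans (ENNReal.ofReal_le_ofReal (by gcongr; exact min_le_left _ _))
  have h0 : volume (innerCollar n Ω 0) = 0 := by
    simpa [zero_rpow (by linarith : η ≠ 0)] using hcollar 0 ⟨le_rfl, zero_le_one⟩
  have hweight := setLIntegral_rpow_neg_lt_top (Metric.continuous_infDist_pt Ωᶜ).measurable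
    (fun _ => Metric.infDist_nonneg) hΩb.measure_lt_top.ne (by positivity) hη hcollar
  have hfinite : Lfun n s₀ Ω Ωᶜ < ⊤ :=
    (Lfun_compl_le n hs0 Ω h0).trans_lt (ENNReal.mul_lt_top ENNReal.ofReal_lt_top hweight)
  exact ⟨hfinite, fun E _ =>
    (Lfun_mono n s₀ inter_subset_right inter_subset_right).trans_lt hfinite⟩

/-- key finiteness estimate: if `Ω ⊂ ℝⁿ` is open and bounded, `s₀ ∈ (0,1/2)`,
and `𝓛ⁿ(D_r^Ω(Ωᶜ)) ≤ c* min{r^η, 1}` on `[0,1]` for some `c* > 0`, `η > 2s₀`, then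
`∫₀^∞ t^{-(1+s₀)} ∫_Ω ∫_{Ωᶜ} p_t(x,y) dy dx dt < ∞`; in particular
`L_{s₀}(E∩Ω, E∩Ωᶜ) < ∞` for every measurable `E`. -/
theorem statement19 (n : ℕ) (hn : 1 ≤ n) (Ω : Set (EuclideanSpace ℝ (Fin n)))
    (hΩo : IsOpen Ω) (hΩb : Bornology.IsBounded Ω)
    (s₀ : ℝ) (hs₀ : s₀ ∈ Set.Ioo (0:ℝ) (1/2))
    (c : ℝ) (hc : 0 < c) (η : ℝ) (hη : 2 * s₀ < η)
    (hbd : ∀ r ∈ Set.Icc (0:ℝ) 1,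
      volume (innerCollar n Ω r) ≤ ENNReal.ofReal (c * min (r ^ η) 1)) :
    Lfun n s₀ Ω Ωᶜ < ⊤ ∧
      ∀ E : Set (EuclideanSpace ℝ (Fin n)), MeasurableSet E →
        Lfun n s₀ (E ∩ Ω) (E ∩ Ωᶜ) < ⊤ :=
  statement19_general n Ω hΩb s₀ hs₀ c hc η hη hbd
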